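/- arXiv:1609.01057 — 4 statements merged into one kernel-verified Lean document; each statement's English description precedes it below -/
import Mathlib

section
/- Let (ξ_i)_{i≥1} be i.i.d. ℕ-valued random variables on a probability space (Ω, P) with E[ξ₁] = 1 and E[ξ₁²] < ∞, and set σ² = Var(ξ₁) and S_n = ∑_{i=1}^n ξ_i. Assume that (i) P(S_n = n−1) > 0 for all sufficiently large n, and (ii) for every measurable g : ℕ × ℕ → ℝ such that g(ξ₁, ξ₂) is integrable, the conditional expectation E[g(ξ₁, ξ₂) | S_n = n−1] converges to E[g(ξ₁, ξ₂)] as n → ∞. Then E[ | (1/n)·∑_{i=1}^n (ξ_i − 1 + 1/n)² − σ² | ; given S_n = n−1 ] → 0 as n → ∞. (This is the consistency of the empirical variance of the numbers of children in a conditioned Galton-Watson tree, via Devroye's representation of the child sequence as an i.i.d. sequence conditioned on its sum.) -/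
/-!
On `{S_n = n - 1}` we have `∑_{i<n} (ξ_i - 1) = -1`, so the statistic equals
`n⁻¹ ∑_{i<n} f(ξ_i) - n⁻²` with `f(a) = (a - 1)²`, and it suffices to prove an L¹ law of large
numbers for `f(ξ_i)` under `P(· | S_n = n - 1)` with limit `E f(ξ₁) = σ²`.

The conditioning event is invariant under permutations of `ξ₁, …, ξ_n`, whose joint law is a
product measure, so under the conditional law every pair `(ξ_i, ξ_j)`, `i ≠ j`, is distributed
as `(ξ₁, ξ₂)`. For a bounded truncation `q = min(f, K)` centred at `m = E q(ξ₁)`, the second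
moment of the conditional average of `q(ξ_i) - m` is then
`n⁻¹ E[(q(ξ₁) - m)²] + (1 - n⁻¹) E[(q(ξ₁) - m)(q(ξ₂) - m)]`, and the hypothesis on pairs sends
the covariance term to its unconditional value `0`. The remainder `f - q ≥ 0` contributes, in
the limit, at most twice its unconditional mean, which is small for large `K`.
-/

open MeasureTheory ProbabilityTheory Filter Finset Topology

section

variable {Ω β : Type*} [MeasurableSpace Ω] [MeasurableSpace β]

def PairExchangeable (μ : Measure Ω) (X : ℕ → Ω → β) (n : ℕ) : Prop :=
  ∀ i j, i < n → j < n → i ≠ j →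
    μ.map (fun ω => (X i ω, X j ω)) = μ.map (fun ω => (X 0 ω, X 1 ω))

lemma abs_inv_mul_sum_sub_le {n : ℕ} (hn : n ≠ 0) {x y : ℕ → ℝ} (hyx : ∀ i, y i ≤ x i)
    (M m : ℝ) :
    |(n : ℝ)⁻¹ * ∑ i ∈ range n, x i - M|
      ≤ |(n : ℝ)⁻¹ * ∑ i ∈ range n, (y i - m)| + (n : ℝ)⁻¹ * ∑ i ∈ range n, (x i - y i)
        + |M - m| := by
  have hsplit : (n : ℝ)⁻¹ * ∑ i ∈ range n, x i - M
      = (n : ℝ)⁻¹ * ∑ i ∈ range n, (y i - m) + (n : ℝ)⁻¹ * ∑ i ∈ range n, (x i - y i)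
        - (M - m) := by
    simp only [sum_sub_distrib, sum_const, card_range, nsmul_eq_mul]
    field_simp
    ring
  have hrem : 0 ≤ (n : ℝ)⁻¹ * ∑ i ∈ range n, (x i - y i) :=
    mul_nonneg (by positivity) (sum_nonneg fun i _ => sub_nonneg.2 (hyx i))
  rw [hsplit]
  refine (abs_sub _ _).trans ?_
  gcongr
  exact (abs_add_le _ _).trans_eq (by rw [abs_of_nonneg hrem])

namespace PairExchangeable

variable {μ : Measure Ω} {n : ℕ}

lemma map_eq {X : ℕ → Ω → β} (h : PairExchangeable μ X n) (hX : ∀ i, Measurable (X i))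
    {i : ℕ} (hi : i < n) : μ.map (X i) = μ.map (X 0) := by
  rcases eq_or_ne i 0 with rfl | hi0
  · rfl
  have := congrArg (Measure.map Prod.fst) (h i 0 hi (by omega) hi0)
  rwa [Measure.map_map measurable_fst ((hX i).prodMk (hX 0)),
    Measure.map_map measurable_fst ((hX 0).prodMk (hX 1))] at this

variable {ξ : ℕ → Ω → ℕ}

lemma integral_comp_eq (h : PairExchangeable μ ξ n) (hξ : ∀ i, Measurable (ξ i)) {i : ℕ}
    (hi : i < n) (g : ℕ → ℝ) : ∫ ω, g (ξ i ω) ∂μ = ∫ ω, g (ξ 0 ω) ∂μ := by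
  have hg : Measurable g := measurable_of_countable g
  rw [← integral_map (hξ i).aemeasurable hg.aestronglyMeasurable, h.map_eq hξ hi,
    integral_map (hξ 0).aemeasurable hg.aestronglyMeasurable]

lemma integrable_comp (h : PairExchangeable μ ξ n) (hξ : ∀ i, Measurable (ξ i)) {i : ℕ}
    (hi : i < n) {g : ℕ → ℝ} (hg : Integrable (fun ω => g (ξ 0 ω)) μ) :
    Integrable (fun ω => g (ξ i ω)) μ := by
  have hg' : Integrable g (μ.map (ξ 0)) :=
    (integrable_map_measure (measurable_of_countable g).aestronglyMeasurable
      (hξ 0).aemeasurable).2 hg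
  rw [← h.map_eq hξ hi] at hg'
  exact (integrable_map_measure (measurable_of_countable g).aestronglyMeasurable
    (hξ i).aemeasurable).1 hg'

lemma integral_comp_pair_eq (h : PairExchangeable μ ξ n) (hξ : ∀ i, Measurable (ξ i))
    {i j : ℕ} (hi : i < n) (hj : j < n) (hij : i ≠ j) (g : ℕ → ℕ → ℝ) :
    ∫ ω, g (ξ i ω) (ξ j ω) ∂μ = ∫ ω, g (ξ 0 ω) (ξ 1 ω) ∂μ := by
  have hg : Measurable (Function.uncurry g) := measurable_of_countable _
  have := congrArg (fun ν => ∫ p, Function.uncurry g p ∂ν) (h i j hi hj hij)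
  rwa [integral_map ((hξ i).prodMk (hξ j)).aemeasurable hg.aestronglyMeasurable,
    integral_map ((hξ 0).prodMk (hξ 1)).aemeasurable hg.aestronglyMeasurable] at this

lemma integral_avg_eq (h : PairExchangeable μ ξ n) (hξ : ∀ i, Measurable (ξ i)) (hn : n ≠ 0)
    {g : ℕ → ℝ} (hg : Integrable (fun ω => g (ξ 0 ω)) μ) :
    ∫ ω, (n : ℝ)⁻¹ * ∑ i ∈ range n, g (ξ i ω) ∂μ = ∫ ω, g (ξ 0 ω) ∂μ := by
  rw [integral_const_mul, integral_finsetSum _ fun i hi => h.integrable_comp hξ (mem_range.1 hi) hg,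
    sum_congr rfl fun i hi => h.integral_comp_eq hξ (mem_range.1 hi) g, sum_const, card_range,
    nsmul_eq_mul, inv_mul_cancel_left₀ (Nat.cast_ne_zero.2 hn)]

lemma integral_sq_avg_eq [IsFiniteMeasure μ] (h : PairExchangeable μ ξ n)
    (hξ : ∀ i, Measurable (ξ i)) (hn : n ≠ 0) {g : ℕ → ℝ} {C : ℝ} (hgC : ∀ a, |g a| ≤ C) :
    ∫ ω, ((n : ℝ)⁻¹ * ∑ i ∈ range n, g (ξ i ω)) ^ 2 ∂μ
      = (n : ℝ)⁻¹ * ∫ ω, g (ξ 0 ω) ^ 2 ∂μ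
        + (1 - (n : ℝ)⁻¹) * ∫ ω, g (ξ 0 ω) * g (ξ 1 ω) ∂μ := by
  have hint : ∀ i j, Integrable (fun ω => g (ξ i ω) * g (ξ j ω)) μ := fun i j =>
    .of_bound (((measurable_of_countable g).comp (hξ i)).mul
        ((measurable_of_countable g).comp (hξ j))).aestronglyMeasurable
      (C * C) (ae_of_all _ fun ω => by
        rw [Real.norm_eq_abs, abs_mul]
        exact mul_le_mul (hgC _) (hgC _) (abs_nonneg _) ((abs_nonneg _).trans (hgC 0)))
  -- Shaped so that the double sum splits into `n²` off-diagonal values plus a diagonal correction.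
  have hentry : ∀ i ∈ range n, ∀ j ∈ range n, ∫ ω, g (ξ i ω) * g (ξ j ω) ∂μ
      = ∫ ω, g (ξ 0 ω) * g (ξ 1 ω) ∂μ
        + if i = j then ∫ ω, g (ξ 0 ω) ^ 2 ∂μ - ∫ ω, g (ξ 0 ω) * g (ξ 1 ω) ∂μ else 0 := by
    intro i hi j hj
    split_ifs with hij
    · subst hij
      simp only [← sq, add_sub_cancel]
      exact h.integral_comp_eq hξ (mem_range.1 hi) (fun a => g a ^ 2)
    · rw [add_zero]
      exact h.integral_comp_pair_eq hξ (mem_range.1 hi) (mem_range.1 hj) hij fun a b => g a * g b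
  have hn' : (n : ℝ) ≠ 0 := Nat.cast_ne_zero.2 hn
  simp_rw [mul_pow, sq (∑ i ∈ range n, _), sum_mul_sum]
  rw [integral_const_mul,
    integral_finsetSum _ fun i _ => integrable_finsetSum _ fun j _ => hint i j]
  simp_rw [integral_finsetSum _ fun j _ => hint _ j]
  rw [sum_congr rfl fun i hi => sum_congr rfl (hentry i hi)]
  simp only [sum_add_distrib, sum_ite_eq, mem_range, sum_const, card_range, nsmul_eq_mul]
  rw [sum_congr rfl fun i hi => if_pos (mem_range.1 hi)]
  simp only [sum_const, card_range, nsmul_eq_mul]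
  field_simp
  ring

lemma integral_abs_avg_sub_le [IsProbabilityMeasure μ] (h : PairExchangeable μ ξ n)
    (hξ : ∀ i, Measurable (ξ i)) (hn : n ≠ 0) {f q : ℕ → ℝ} (hqf : ∀ a, q a ≤ f a)
    (hf : Integrable (fun ω => f (ξ 0 ω)) μ) (hq : Integrable (fun ω => q (ξ 0 ω)) μ) (M m : ℝ) :
    ∫ ω, |(n : ℝ)⁻¹ * ∑ i ∈ range n, f (ξ i ω) - M| ∂μ
      ≤ ∫ ω, |(n : ℝ)⁻¹ * ∑ i ∈ range n, (q (ξ i ω) - m)| ∂μ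
        + ∫ ω, (f (ξ 0 ω) - q (ξ 0 ω)) ∂μ + |M - m| := by
  have hfi : ∀ i ∈ range n, Integrable (fun ω => f (ξ i ω)) μ :=
    fun i hi => h.integrable_comp hξ (mem_range.1 hi) hf
  have hqi : ∀ i ∈ range n, Integrable (fun ω => q (ξ i ω)) μ :=
    fun i hi => h.integrable_comp hξ (mem_range.1 hi) hq
  have hrem : Integrable (fun ω => (n : ℝ)⁻¹ * ∑ i ∈ range n, (f (ξ i ω) - q (ξ i ω))) μ :=
    (integrable_finsetSum _ fun i hi => (hfi i hi).sub (hqi i hi)).const_mul _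
  have hdev : Integrable (fun ω => |(n : ℝ)⁻¹ * ∑ i ∈ range n, (q (ξ i ω) - m)|) μ :=
    ((integrable_finsetSum _ fun i hi => (hqi i hi).sub (integrable_const m)).const_mul _).abs
  have hsum : Integrable (fun ω => |(n : ℝ)⁻¹ * ∑ i ∈ range n, (q (ξ i ω) - m)|
      + (n : ℝ)⁻¹ * ∑ i ∈ range n, (f (ξ i ω) - q (ξ i ω))) μ := hdev.add hrem
  calc _ ≤ ∫ ω, (|(n : ℝ)⁻¹ * ∑ i ∈ range n, (q (ξ i ω) - m)|
        + (n : ℝ)⁻¹ * ∑ i ∈ range n, (f (ξ i ω) - q (ξ i ω)) + |M - m|) ∂μ :=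
        integral_mono (((integrable_finsetSum _ hfi).const_mul _).sub (integrable_const M)).abs
          (hsum.add (integrable_const _))
          fun ω => abs_inv_mul_sum_sub_le hn (fun i => hqf (ξ i ω)) M m
    _ = _ := by
        rw [integral_add hsum (integrable_const _), integral_add hdev hrem,
          h.integral_avg_eq hξ hn (g := fun a => f a - q a) (hf.sub hq)]
        simp

end PairExchangeable

lemma Equiv.Perm.exists_apply_eq_and_apply_eq {α : Type*} [DecidableEq α] {a b c d : α}
    (hab : a ≠ b) (hcd : c ≠ d) : ∃ e : Equiv.Perm α, e a = c ∧ e b = d := by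
  have hb : Equiv.swap a c d ≠ a := by
    rw [Ne, Equiv.swap_apply_eq_iff, Equiv.swap_apply_left]; exact hcd.symm
  refine ⟨Equiv.swap a c * Equiv.swap b (Equiv.swap a c d), ?_, ?_⟩
  · rw [Equiv.Perm.mul_apply, Equiv.swap_apply_of_ne_of_ne hab hb.symm, Equiv.swap_apply_left]
  · rw [Equiv.Perm.mul_apply, Equiv.swap_apply_left, Equiv.swap_apply_self]

lemma map_fin_comp_perm_eq {P : Measure Ω} [IsProbabilityMeasure P] {ξ : ℕ → Ω → β}
    (hξ : ∀ i, Measurable (ξ i)) (hindep : iIndepFun ξ P)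
    (hident : ∀ i, P.map (ξ i) = P.map (ξ 0)) {n : ℕ} (e : Equiv.Perm (Fin n)) :
    P.map (fun ω k => ξ (e k) ω) = P.map (fun ω (k : Fin n) => ξ k ω) := by
  rw [(iIndepFun_iff_map_fun_eq_pi_map fun k => (hξ _).aemeasurable).1
      (hindep.precomp (g := fun k : Fin n => (e k : ℕ)) (Fin.val_injective.comp e.injective)),
    (iIndepFun_iff_map_fun_eq_pi_map fun k => (hξ _).aemeasurable).1
      (hindep.precomp Fin.val_injective)]
  simp only [hident]

lemma map_cond_preimage_eq {α : Type*} [MeasurableSpace α] {P : Measure Ω} {X Y : Ω → α}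
    (hX : Measurable X) (hY : Measurable Y) (hXY : P.map X = P.map Y) {S : Set α}
    (hS : MeasurableSet S) : (P[|X ⁻¹' S]).map X = (P[|Y ⁻¹' S]).map Y := by
  have hP : P (X ⁻¹' S) = P (Y ⁻¹' S) := by
    rw [← Measure.map_apply hX hS, ← Measure.map_apply hY hS, hXY]
  rw [ProbabilityTheory.cond, ProbabilityTheory.cond, Measure.map_smul, Measure.map_smul,
    ← Measure.restrict_map hX hS, ← Measure.restrict_map hY hS, hXY, hP]

lemma pairExchangeable_cond_sum_eq {P : Measure Ω} [IsProbabilityMeasure P] {ξ : ℕ → Ω → ℕ}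
    (hξ : ∀ i, Measurable (ξ i)) (hindep : iIndepFun ξ P)
    (hident : ∀ i, P.map (ξ i) = P.map (ξ 0)) (n c : ℕ) :
    PairExchangeable (P[|{ω | ∑ i ∈ range n, ξ i ω = c}]) ξ n := by
  intro i j hi hj hij
  obtain ⟨e, he0, he1⟩ := Equiv.Perm.exists_apply_eq_and_apply_eq
    (a := (⟨0, by omega⟩ : Fin n)) (b := ⟨1, by omega⟩) (c := ⟨i, hi⟩) (d := ⟨j, hj⟩)
    (by simp) (by simpa using hij)
  set X : Ω → Fin n → ℕ := fun ω k => ξ k ω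
  have hX : Measurable X := measurable_pi_lambda _ fun k => hξ k
  have hXe : Measurable (fun ω k => X ω (e k)) := measurable_pi_lambda _ fun k => hξ _
  set S : Set (Fin n → ℕ) := {x | ∑ k, x k = c}
  have hA : {ω | ∑ i ∈ range n, ξ i ω = c} = X ⁻¹' S := by
    ext ω; simp [X, S, Fin.sum_univ_eq_sum_range (fun k => ξ k ω)]
  have hAe : {ω | ∑ i ∈ range n, ξ i ω = c} = (fun ω k => X ω (e k)) ⁻¹' S := by
    ext ω; simp [X, S, Equiv.sum_comp e (fun k : Fin n => ξ k ω),
      Fin.sum_univ_eq_sum_range (fun k => ξ k ω)]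
  have hlaw := map_cond_preimage_eq hXe hX (map_fin_comp_perm_eq hξ hindep hident e)
    (Set.to_countable S).measurableSet
  rw [← hA, ← hAe] at hlaw
  have hπ : Measurable (fun x : Fin n → ℕ => (x ⟨0, by omega⟩, x ⟨1, by omega⟩)) :=
    (measurable_pi_apply _).prodMk (measurable_pi_apply _)
  have := congrArg (Measure.map (fun x : Fin n → ℕ => (x ⟨0, by omega⟩, x ⟨1, by omega⟩))) hlaw
  rw [Measure.map_map hπ hXe, Measure.map_map hπ hX] at this
  simpa [Function.comp_def, X, he0, he1] using this

lemma MeasureTheory.Integrable.cond {E : Type*} [NormedAddCommGroup E] {P : Measure Ω}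
    {f : Ω → E} (hf : Integrable f P)
    (s : Set Ω) : Integrable f (P[|s]) := by
  by_cases hs : P s = 0
  · simp [cond_eq_zero_of_meas_eq_zero hs]
  · exact hf.restrict.smul_measure (ENNReal.inv_ne_top.2 hs)

lemma sq_integral_abs_le_integral_sq {μ : Measure Ω} [IsProbabilityMeasure μ] {f : Ω → ℝ}
    (hf : MemLp f 2 μ) : (∫ ω, |f ω| ∂μ) ^ 2 ≤ ∫ ω, f ω ^ 2 ∂μ := by
  have := variance_nonneg |f| μ
  rw [variance_eq_sub hf.abs] at this
  simpa [sq_abs] using this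

lemma tendsto_integral_min_natCast {μ : Measure Ω} {Y : Ω → ℝ} (hY : Integrable Y μ) :
    Tendsto (fun K : ℕ => ∫ ω, min (Y ω) K ∂μ) atTop (𝓝 (∫ ω, Y ω ∂μ)) := by
  refine tendsto_integral_of_dominated_convergence (fun ω => |Y ω|)
    (fun K => (hY.aestronglyMeasurable.inf aestronglyMeasurable_const)) hY.abs
    (fun K => ae_of_all _ fun ω => ?_) (ae_of_all _ fun ω => ?_)
  · rw [Real.norm_eq_abs, abs_le]
    constructor
    · exact le_min (neg_abs_le _) ((neg_nonpos.2 (abs_nonneg _)).trans (Nat.cast_nonneg K))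
    · exact (min_le_left _ _).trans (le_abs_self _)
  · exact tendsto_const_nhds.congr' <| (tendsto_natCast_atTop_atTop.eventually_ge_atTop (Y ω)).mono
      fun K hK => (min_eq_left hK).symm

lemma ProbabilityTheory.IndepFun.integral_comp_mul_comp_eq_sq {P : Measure Ω} {X Y : Ω → ℕ}
    (hX : Measurable X) (hY : Measurable Y) (hXY : IndepFun X Y P) (hident : P.map Y = P.map X)
    (g : ℕ → ℝ) : ∫ ω, g (X ω) * g (Y ω) ∂P = (∫ ω, g (X ω) ∂P) ^ 2 := by
  have hg : Measurable g := measurable_of_countable g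
  have hYX : ∫ ω, g (Y ω) ∂P = ∫ ω, g (X ω) ∂P := by
    rw [← integral_map hY.aemeasurable hg.aestronglyMeasurable, hident,
      integral_map hX.aemeasurable hg.aestronglyMeasurable]
  have := (hXY.comp hg hg).integral_fun_mul_eq_mul_integral (hg.comp hX).aestronglyMeasurable
    (hg.comp hY).aestronglyMeasurable
  simp only [Function.comp_apply] at this
  rw [this, hYX, sq]

lemma tendsto_integral_centred_mul_centred {P : Measure Ω} [IsProbabilityMeasure P]
    {μ : ℕ → Measure Ω} {ξ : ℕ → Ω → ℕ} (hξ : ∀ i, Measurable (ξ i))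
    (hindep : IndepFun (ξ 0) (ξ 1) P) (hident : P.map (ξ 1) = P.map (ξ 0))
    (hlim : ∀ g : ℕ × ℕ → ℝ, Integrable (fun ω => g (ξ 0 ω, ξ 1 ω)) P →
      Tendsto (fun n => ∫ ω, g (ξ 0 ω, ξ 1 ω) ∂μ n) atTop (𝓝 (∫ ω, g (ξ 0 ω, ξ 1 ω) ∂P)))
    {q : ℕ → ℝ} {C : ℝ} (hqC : ∀ a, |q a| ≤ C) :
    Tendsto (fun n => ∫ ω, (q (ξ 0 ω) - ∫ ω, q (ξ 0 ω) ∂P) * (q (ξ 1 ω) - ∫ ω, q (ξ 0 ω) ∂P)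
      ∂μ n) atTop (𝓝 0) := by
  set m := ∫ ω, q (ξ 0 ω) ∂P
  have hq : Integrable (fun ω => q (ξ 0 ω)) P :=
    .of_bound ((measurable_of_countable q).comp (hξ 0)).aestronglyMeasurable C
      (ae_of_all _ fun ω => hqC _)
  have hdevC : ∀ a, |q a - m| ≤ C + |m| := fun a => (abs_sub _ _).trans (by linarith [hqC a])
  have := hlim (fun p => (q p.1 - m) * (q p.2 - m)) <| .of_bound
    ((measurable_of_countable (fun p : ℕ × ℕ => (q p.1 - m) * (q p.2 - m))).comp
      ((hξ 0).prodMk (hξ 1))).aestronglyMeasurable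
    ((C + |m|) * (C + |m|)) (ae_of_all _ fun ω => by
      rw [Real.norm_eq_abs, abs_mul]
      exact mul_le_mul (hdevC _) (hdevC _) (abs_nonneg _) ((abs_nonneg _).trans (hdevC 0)))
  rwa [hindep.integral_comp_mul_comp_eq_sq (hξ 0) (hξ 1) hident (fun a => q a - m),
    integral_sub hq (integrable_const m), integral_const, probReal_univ, one_smul, sub_self,
    zero_pow two_ne_zero] at this

lemma tendsto_integral_abs_avg_of_tendsto_integral_mul {μ : ℕ → Measure Ω}
    (hμ : ∀ᶠ n in atTop, IsProbabilityMeasure (μ n)) {ξ : ℕ → Ω → ℕ}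
    (hξ : ∀ i, Measurable (ξ i)) (hexch : ∀ᶠ n in atTop, PairExchangeable (μ n) ξ n)
    {g : ℕ → ℝ} {C : ℝ} (hgC : ∀ a, |g a| ≤ C)
    (hcov : Tendsto (fun n => ∫ ω, g (ξ 0 ω) * g (ξ 1 ω) ∂μ n) atTop (𝓝 0)) :
    Tendsto (fun n => ∫ ω, |(n : ℝ)⁻¹ * ∑ i ∈ range n, g (ξ i ω)| ∂μ n) atTop (𝓝 0) := by
  have hg : Measurable g := measurable_of_countable g
  have hC : 0 ≤ C := (abs_nonneg _).trans (hgC 0)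
  have hdiag : Tendsto (fun n : ℕ => (n : ℝ)⁻¹ * ∫ ω, g (ξ 0 ω) ^ 2 ∂μ n) atTop (𝓝 0) := by
    refine squeeze_zero_norm' ?_ (by simpa using tendsto_inv_atTop_nhds_zero_nat.mul_const (C ^ 2))
    filter_upwards [hμ] with n hμn
    rw [norm_mul, norm_inv, RCLike.norm_natCast]
    refine mul_le_mul_of_nonneg_left ?_ (by positivity)
    simpa using norm_integral_le_of_norm_le_const (μ := μ n) (f := fun ω => g (ξ 0 ω) ^ 2)
      (ae_of_all _ fun ω => by
        rw [norm_pow, Real.norm_eq_abs]; exact pow_le_pow_left₀ (abs_nonneg _) (hgC _) 2)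
  have hL2 : Tendsto (fun n => ∫ ω, ((n : ℝ)⁻¹ * ∑ i ∈ range n, g (ξ i ω)) ^ 2 ∂μ n)
      atTop (𝓝 0) := by
    have := hdiag.add (((tendsto_const_nhds (x := (1 : ℝ))).sub
      tendsto_inv_atTop_nhds_zero_nat).mul hcov)
    rw [mul_zero, add_zero] at this
    refine this.congr' ?_
    filter_upwards [hμ, hexch, eventually_ne_atTop 0] with n hμn hn hn0
    exact (hn.integral_sq_avg_eq hξ hn0 hgC).symm
  refine squeeze_zero' (Eventually.of_forall fun n => integral_nonneg fun ω => abs_nonneg _) ?_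
    (by simpa using hL2.sqrt)
  filter_upwards [hμ] with n hμn
  have hmeas : Measurable fun ω => (n : ℝ)⁻¹ * ∑ i ∈ range n, g (ξ i ω) :=
    (Finset.measurable_sum _ fun i _ => hg.comp (hξ i)).const_mul _
  refine (le_abs_self _).trans (Real.abs_le_sqrt (sq_integral_abs_le_integral_sq ?_))
  refine .of_bound hmeas.aestronglyMeasurable C (ae_of_all _ fun ω => ?_)
  rw [Real.norm_eq_abs, abs_mul, abs_inv, Nat.abs_cast]
  rcases eq_or_ne n 0 with rfl | hn
  · simpa using hC
  calc (n : ℝ)⁻¹ * |∑ i ∈ range n, g (ξ i ω)| ≤ (n : ℝ)⁻¹ * (n * C) := by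
        gcongr
        exact (abs_sum_le_sum_abs _ _).trans
          (by simpa using sum_le_sum (s := range n) fun i _ => hgC (ξ i ω))
    _ = C := by field_simp

theorem tendsto_integral_abs_avg_sub_integral {P : Measure Ω} [IsProbabilityMeasure P]
    {μ : ℕ → Measure Ω} (hμ : ∀ᶠ n in atTop, IsProbabilityMeasure (μ n)) {ξ : ℕ → Ω → ℕ}
    (hξ : ∀ i, Measurable (ξ i)) (hexch : ∀ᶠ n in atTop, PairExchangeable (μ n) ξ n)
    (hindep : IndepFun (ξ 0) (ξ 1) P) (hident : P.map (ξ 1) = P.map (ξ 0))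
    (hlim : ∀ g : ℕ × ℕ → ℝ, Integrable (fun ω => g (ξ 0 ω, ξ 1 ω)) P →
      Tendsto (fun n => ∫ ω, g (ξ 0 ω, ξ 1 ω) ∂μ n) atTop (𝓝 (∫ ω, g (ξ 0 ω, ξ 1 ω) ∂P)))
    {f : ℕ → ℝ} (hf0 : ∀ a, 0 ≤ f a) (hf : Integrable (fun ω => f (ξ 0 ω)) P)
    (hfμ : ∀ᶠ n in atTop, Integrable (fun ω => f (ξ 0 ω)) (μ n)) :
    Tendsto (fun n => ∫ ω, |(n : ℝ)⁻¹ * ∑ i ∈ range n, f (ξ i ω) - ∫ ω, f (ξ 0 ω) ∂P| ∂μ n)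
      atTop (𝓝 0) := by
  set M := ∫ ω, f (ξ 0 ω) ∂P
  refine tendsto_order.2 ⟨fun a ha => .of_forall fun n =>
    ha.trans_le (integral_nonneg fun ω => abs_nonneg _), fun ε hε => ?_⟩
  obtain ⟨K, hK⟩ : ∃ K : ℕ, |M - ∫ ω, min (f (ξ 0 ω)) K ∂P| < ε / 2 := by
    refine ((tendsto_integral_min_natCast hf).eventually
      (Metric.ball_mem_nhds M (half_pos hε))).exists.imp fun K hK => ?_
    rwa [Real.dist_eq, abs_sub_comm] at hK
  set q : ℕ → ℝ := fun a => min (f a) K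
  set m := ∫ ω, q (ξ 0 ω) ∂P
  have hqK : ∀ a, |q a| ≤ K := fun a => by
    rw [abs_of_nonneg (le_min (hf0 a) (Nat.cast_nonneg K))]; exact min_le_right _ _
  have hq : ∀ (ν : Measure Ω) [IsFiniteMeasure ν], Integrable (fun ω => q (ξ 0 ω)) ν :=
    fun ν _ => .of_bound ((measurable_of_countable q).comp (hξ 0)).aestronglyMeasurable K
      (ae_of_all _ fun ω => hqK _)
  have hdevC : ∀ a, |q a - m| ≤ K + |m| := fun a => (abs_sub _ _).trans (by linarith [hqK a])
  have hcov := tendsto_integral_centred_mul_centred hξ hindep hident hlim hqK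
  have hrem : Tendsto (fun n => ∫ ω, (f (ξ 0 ω) - q (ξ 0 ω)) ∂μ n) atTop (𝓝 (M - m)) := by
    have := hlim (fun p => f p.1 - q p.1) (hf.sub (hq P))
    rwa [integral_sub hf (hq P)] at this
  have hbound : ∀ᶠ n in atTop, ∫ ω, |(n : ℝ)⁻¹ * ∑ i ∈ range n, f (ξ i ω) - M| ∂μ n
      ≤ ∫ ω, |(n : ℝ)⁻¹ * ∑ i ∈ range n, (q (ξ i ω) - m)| ∂μ n
        + ∫ ω, (f (ξ 0 ω) - q (ξ 0 ω)) ∂μ n + |M - m| := by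
    filter_upwards [hμ, hexch, hfμ, eventually_ne_atTop 0] with n hμn hn hfn hn0
    exact hn.integral_abs_avg_sub_le hξ hn0 (fun a => min_le_left _ _) hfn (hq _) M m
  have hupper := ((tendsto_integral_abs_avg_of_tendsto_integral_mul hμ hξ hexch
    (g := fun a => q a - m) hdevC hcov).add hrem).add_const |M - m|
  filter_upwards [hbound, hupper.eventually (gt_mem_nhds (show 0 + (M - m) + |M - m| < ε by
    linarith [le_abs_self (M - m)]))]
    with n h1 h2 using h1.trans_lt h2

lemma inv_mul_sum_sub_one_add_inv_sq {n : ℕ} (hn : n ≠ 0) {x : ℕ → ℝ}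
    (hx : ∑ i ∈ range n, x i = n - 1) :
    1 / (n : ℝ) * ∑ i ∈ range n, (x i - 1 + 1 / n) ^ 2
      = (n : ℝ)⁻¹ * ∑ i ∈ range n, (x i - 1) ^ 2 - 1 / n ^ 2 := by
  have hterm : ∀ a : ℝ, (a - 1 + 1 / n) ^ 2 = (a - 1) ^ 2 + (2 / n * a + (1 / n ^ 2 - 2 / n)) :=
    fun a => by ring
  rw [sum_congr rfl fun i _ => hterm (x i), sum_add_distrib, sum_add_distrib, ← mul_sum, hx,
    sum_const, card_range, nsmul_eq_mul]
  field_simp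
  ring

lemma integral_abs_avg_shift_le {μ : Measure Ω} [IsProbabilityMeasure μ] {ξ : ℕ → Ω → ℕ}
    {n : ℕ} (hn : n ≠ 0) (hsum : ∀ᵐ ω ∂μ, ∑ i ∈ range n, ξ i ω = n - 1)
    (hint : ∀ i < n, Integrable (fun ω => ((ξ i ω : ℝ) - 1) ^ 2) μ) (σ : ℝ) :
    ∫ ω, |1 / (n : ℝ) * ∑ i ∈ range n, ((ξ i ω : ℝ) - 1 + 1 / n) ^ 2 - σ| ∂μ
      ≤ ∫ ω, |(n : ℝ)⁻¹ * ∑ i ∈ range n, ((ξ i ω : ℝ) - 1) ^ 2 - σ| ∂μ + 1 / n ^ 2 := by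
  have hdev : Integrable (fun ω => (n : ℝ)⁻¹ * ∑ i ∈ range n, ((ξ i ω : ℝ) - 1) ^ 2 - σ) μ :=
    ((integrable_finsetSum _ fun i hi => hint i (mem_range.1 hi)).const_mul _).sub
      (integrable_const _)
  have hshift : (fun ω => |1 / (n : ℝ) * ∑ i ∈ range n, ((ξ i ω : ℝ) - 1 + 1 / n) ^ 2 - σ|)
      =ᵐ[μ] fun ω => |((n : ℝ)⁻¹ * ∑ i ∈ range n, ((ξ i ω : ℝ) - 1) ^ 2 - σ) - 1 / n ^ 2| := by
    filter_upwards [hsum] with ω hω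
    have hω' : ∑ i ∈ range n, (ξ i ω : ℝ) = n - 1 := by
      rw [← Nat.cast_sum, hω, Nat.cast_sub (Nat.one_le_iff_ne_zero.2 hn), Nat.cast_one]
    rw [inv_mul_sum_sub_one_add_inv_sq hn hω', sub_right_comm]
  rw [integral_congr_ae hshift]
  calc _ ≤ ∫ ω, (|(n : ℝ)⁻¹ * ∑ i ∈ range n, ((ξ i ω : ℝ) - 1) ^ 2 - σ| + 1 / (n : ℝ) ^ 2) ∂μ :=
        integral_mono (hdev.sub (integrable_const _)).abs (hdev.abs.add (integrable_const _))
          fun ω => (abs_sub _ _).trans_eq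
            (by rw [abs_of_nonneg (by positivity : 0 ≤ 1 / (n : ℝ) ^ 2)])
    _ = _ := by simp [integral_add hdev.abs (integrable_const _)]

end

theorem stmt_1 {Ω : Type*} [MeasurableSpace Ω] (P : Measure Ω) [IsProbabilityMeasure P]
    (ξ : ℕ → Ω → ℕ) (hmeas : ∀ i, Measurable (ξ i))
    (hindep : iIndepFun ξ P)
    (hident : ∀ i, Measure.map (ξ i) P = Measure.map (ξ 0) P)
    (hmean : ∫ ω, (ξ 0 ω : ℝ) ∂P = 1)
    (hL2 : Integrable (fun ω => ((ξ 0 ω : ℝ)) ^ 2) P)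
    (σ2 : ℝ) (hσ2 : σ2 = variance (fun ω => (ξ 0 ω : ℝ)) P)
    (A : ℕ → Set Ω) (hA : ∀ n, A n = {ω | ∑ i ∈ Finset.range n, ξ i ω = n - 1})
    (hpos : ∀ᶠ n in atTop, 0 < P (A n))
    (hcond : ∀ g : ℕ × ℕ → ℝ, Measurable g →
      Integrable (fun ω => g (ξ 0 ω, ξ 1 ω)) P →
      Tendsto (fun n => ∫ ω, g (ξ 0 ω, ξ 1 ω) ∂(P[|A n])) atTop
        (nhds (∫ ω, g (ξ 0 ω, ξ 1 ω) ∂P))) :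
    Tendsto (fun n => ∫ ω,
        |(1 / (n : ℝ)) * ∑ i ∈ Finset.range n, ((ξ i ω : ℝ) - 1 + 1 / (n : ℝ)) ^ 2 - σ2|
        ∂(P[|A n])) atTop (nhds 0) := by
  have hX : Measurable fun ω => (ξ 0 ω : ℝ) := (measurable_of_countable _).comp (hmeas 0)
  have hf : Integrable (fun ω => ((ξ 0 ω : ℝ) - 1) ^ 2) P :=
    (((memLp_two_iff_integrable_sq hX.aestronglyMeasurable).2 hL2).sub
      (memLp_const 1)).integrable_sq
  have hσf : σ2 = ∫ ω, ((ξ 0 ω : ℝ) - 1) ^ 2 ∂P := by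
    rw [hσ2, variance_eq_integral hX.aemeasurable, hmean]
  have hμ : ∀ᶠ n in atTop, IsProbabilityMeasure (P[|A n]) :=
    hpos.mono fun n hn => cond_isProbabilityMeasure hn.ne'
  have hexch : ∀ n, PairExchangeable (P[|A n]) ξ n := fun n => by
    rw [hA n]; exact pairExchangeable_cond_sum_eq hmeas hindep hident n (n - 1)
  have hLLN := tendsto_integral_abs_avg_sub_integral (μ := fun n => P[|A n])
    (f := fun a => ((a : ℝ) - 1) ^ 2) hμ hmeas (.of_forall hexch) (hindep.indepFun zero_ne_one)
    (hident 1) (fun g => hcond g (measurable_of_countable g)) (fun a => sq_nonneg _) hf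
    (.of_forall fun n => hf.cond _)
  rw [← hσf] at hLLN
  have hsq : Tendsto (fun n : ℕ => 1 / (n : ℝ) ^ 2) atTop (𝓝 0) := by
    simpa using (tendsto_inv_atTop_nhds_zero_nat (𝕜 := ℝ)).pow 2
  refine squeeze_zero' (.of_forall fun n => integral_nonneg fun ω => abs_nonneg _) ?_
    (by simpa only [add_zero] using hLLN.add hsq)
  filter_upwards [hμ, eventually_ne_atTop 0] with n hμn hn
  have hAn : MeasurableSet (A n) := by
    rw [hA n]; exact (Finset.measurable_sum _ fun i _ => hmeas i) (measurableSet_singleton _)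
  refine integral_abs_avg_shift_le (ξ := ξ) hn ?_
    (fun i hi => (hexch n).integrable_comp hmeas hi (g := fun a => ((a : ℝ) - 1) ^ 2) (hf.cond _))
    σ2
  filter_upwards [ae_cond_mem hAn] with ω hω
  rwa [hA n] at hω
end

section
/- Let (ξ_i)_{i≥1} be i.i.d. ℕ-valued random variables on a probability space (Ω, P) with E[ξ₁] = 1 and E[ξ₁²] < ∞, set σ² = Var(ξ₁) and S_n = ∑_{i=1}^n ξ_i. Assume that P(S_n = n−1) > 0 for all sufficiently large n and that for every measurable g : ℕ × ℕ → ℝ such that g(ξ₁, ξ₂) is integrable, E[g(ξ₁, ξ₂) | S_n = n−1] → E[g(ξ₁, ξ₂)] as n → ∞. Then for every fixed integer k ≥ 1, the truncated conditional fourth-moment quantity Q(n,k) = E[ ( (1/n)·∑_{i=1}^n (ξ_i·1_{ξ_i≤k} − 1 + 1/n)² − σ² )² ; given S_n = n−1 ] converges, as n → ∞, to ( E[(ξ₁·1_{ξ₁≤k} − 1)²] − σ² )². -/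
/-!
Conditioning on `{S_n = n - 1}`, an event invariant under permutations of `ξ_0, …, ξ_{n-1}`,
preserves the exchangeability of the i.i.d. family: every pair `(ξ_i, ξ_j)` with `i ≠ j < n`
has the conditional law of `(ξ_0, ξ_1)`. For the bounded variables `Y_i = ξ_i 1_{ξ_i ≤ k} - 1`
the empirical mean `q_n` of the `Y_i²` therefore has conditional second moment
`E[Y_0⁴]/n + (1 - 1/n) E[Y_0² Y_1²]` and conditional mean `E[Y_0²]`. By the hypothesis on
conditional limits and the independence of `ξ_0, ξ_1` these tend to `(E Y_0²)²` and `E Y_0²`,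
so `E[(q_n - σ²)² | S_n = n - 1] → (E Y_0² - σ²)²`. The shift by `1/n` inside the squares moves
`q_n` by `O(1/n)` uniformly, which does not change the limit.
-/

open MeasureTheory ProbabilityTheory Filter Finset Topology

section

variable {Ω β : Type*} [MeasurableSpace Ω] [MeasurableSpace β]

lemma ProbabilityTheory.map_cond_preimage {μ : Measure Ω} {f : Ω → β} (hf : Measurable f)
    {s : Set β} (hs : MeasurableSet s) : (μ[|f ⁻¹' s]).map f = (μ.map f)[|s] := by
  ext t ht
  rw [Measure.map_apply hf ht, cond_apply (hf hs), cond_apply hs, Measure.map_apply hf hs,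
    Measure.map_apply hf (hs.inter ht), Set.preimage_inter]

lemma ProbabilityTheory.IdentDistrib.cond_preimage {γ : Type*} [MeasurableSpace γ] {μ : Measure Ω}
    {ν : Measure γ} {f : Ω → β} {g : γ → β}
    (h : IdentDistrib f g μ ν) (hf : Measurable f) (hg : Measurable g) {s : Set β}
    (hs : MeasurableSet s) : IdentDistrib f g (μ[|f ⁻¹' s]) (ν[|g ⁻¹' s]) where
  aemeasurable_fst := hf.aemeasurable
  aemeasurable_snd := hg.aemeasurable
  map_eq := by rw [map_cond_preimage hf hs, map_cond_preimage hg hs, h.map_eq]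

lemma ProbabilityTheory.iIndepFun.identDistrib_comp_perm {ι : Type*} [Fintype ι] {P : Measure Ω}
    [IsProbabilityMeasure P] {X : ι → Ω → β} (hX : ∀ i, Measurable (X i))
    (hind : iIndepFun X P) (hid : ∀ i j, P.map (X i) = P.map (X j)) (σ : Equiv.Perm ι) :
    IdentDistrib (fun ω i => X (σ i) ω) (fun ω i => X i ω) P P where
  aemeasurable_fst := (measurable_pi_lambda _ fun i => hX (σ i)).aemeasurable
  aemeasurable_snd := (measurable_pi_lambda _ hX).aemeasurable
  map_eq := by
    rw [(iIndepFun_iff_map_fun_eq_pi_map fun i => (hX (σ i)).aemeasurable).1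
        (hind.precomp σ.injective),
      (iIndepFun_iff_map_fun_eq_pi_map fun i => (hX i).aemeasurable).1 hind]
    congr 1
    funext i
    exact hid _ _

lemma identDistrib_pair_cond_of_perm_invariant {P : Measure Ω} [IsProbabilityMeasure P]
    {ξ : ℕ → Ω → β} (hξ : ∀ i, Measurable (ξ i))
    (hind : iIndepFun ξ P) (hid : ∀ i, P.map (ξ i) = P.map (ξ 0)) {n : ℕ}
    {B : Set (Fin n → β)} (hB : MeasurableSet B)
    (hBσ : ∀ (σ : Equiv.Perm (Fin n)) (x : Fin n → β), x ∘ σ ∈ B ↔ x ∈ B)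
    {i j : ℕ} (hi : i < n) (hj : j < n) (hij : i ≠ j) :
    IdentDistrib (fun ω => (ξ i ω, ξ j ω)) (fun ω => (ξ 0 ω, ξ 1 ω))
      (P[|(fun ω (t : Fin n) => ξ t ω) ⁻¹' B]) (P[|(fun ω (t : Fin n) => ξ t ω) ⁻¹' B]) := by
  have hn : 1 < n := by omega
  obtain ⟨σ, hσ⟩ := Equiv.Perm.exists_extending_pair ![(⟨0, by omega⟩ : Fin n), ⟨1, hn⟩]
    ![⟨i, hi⟩, ⟨j, hj⟩] (by simp [Fin.ext_iff]) (by simp [Fin.ext_iff, hij])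
  set X : Ω → Fin n → β := fun ω t => ξ t ω
  have hX : Measurable X := measurable_pi_lambda _ fun t => hξ t
  have hXσ : Measurable fun ω t => X ω (σ t) := measurable_pi_lambda _ fun t => hξ _
  have hlaw : IdentDistrib (fun ω t => X ω (σ t)) X P P :=
    (hind.precomp Fin.val_injective).identDistrib_comp_perm (X := fun t : Fin n => ξ t)
      (fun t => hξ t) (fun s t => (hid s).trans (hid t).symm) σ
  have hpre : (fun ω t => X ω (σ t)) ⁻¹' B = X ⁻¹' B := by ext ω; exact hBσ σ (X ω)
  have hcond := hlaw.cond_preimage hXσ hX hB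
  rw [hpre] at hcond
  have hproj : Measurable fun x : Fin n → β => (x ⟨0, by omega⟩, x ⟨1, hn⟩) := by fun_prop
  have h0 : σ ⟨0, by omega⟩ = ⟨i, hi⟩ := hσ 0
  have h1 : σ ⟨1, hn⟩ = ⟨j, hj⟩ := hσ 1
  convert hcond.comp hproj using 1
  · funext ω
    simp [X, h0, h1]
  · rfl

lemma identDistrib_pair_cond_sum_eq {P : Measure Ω} [IsProbabilityMeasure P]
    {ξ : ℕ → Ω → ℕ} (hξ : ∀ i, Measurable (ξ i))
    (hind : iIndepFun ξ P) (hid : ∀ i, P.map (ξ i) = P.map (ξ 0)) (n m : ℕ)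
    {i j : ℕ} (hi : i < n) (hj : j < n) (hij : i ≠ j) :
    IdentDistrib (fun ω => (ξ i ω, ξ j ω)) (fun ω => (ξ 0 ω, ξ 1 ω))
      (P[|{ω | ∑ t ∈ Finset.range n, ξ t ω = m}]) (P[|{ω | ∑ t ∈ Finset.range n, ξ t ω = m}]) := by
  have hA : {ω | ∑ t ∈ Finset.range n, ξ t ω = m}
      = (fun ω (t : Fin n) => ξ t ω) ⁻¹' {x | ∑ t, x t = m} := by
    ext ω
    change _ = m ↔ _ = m
    rw [Fin.sum_univ_eq_sum_range (fun t => ξ t ω)]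
  rw [hA]
  exact identDistrib_pair_cond_of_perm_invariant hξ hind hid (.of_discrete)
    (fun σ x => by simp [Equiv.sum_comp σ x]) hi hj hij

lemma abs_sq_le_of_abs_le {t M : ℝ} (h : |t| ≤ M) : |t ^ 2| ≤ M ^ 2 :=
  (abs_pow t 2).trans_le (pow_le_pow_left₀ (abs_nonneg t) h 2)

lemma abs_one_div_mul_sum_le {n : ℕ} {x : ℕ → ℝ} {M : ℝ} (hM : 0 ≤ M)
    (hx : ∀ i ∈ range n, |x i| ≤ M) : |1 / (n : ℝ) * ∑ i ∈ range n, x i| ≤ M := by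
  rcases n.eq_zero_or_pos with rfl | hn
  · simpa using hM
  have hn' : (0 : ℝ) < n := by exact_mod_cast hn
  calc |1 / (n : ℝ) * ∑ i ∈ range n, x i| ≤ 1 / n * ∑ i ∈ range n, |x i| := by
        rw [abs_mul, abs_of_pos (by positivity)]
        gcongr
        exact abs_sum_le_sum_abs _ _
    _ ≤ 1 / n * (n * M) := by
        gcongr
        simpa using sum_le_card_nsmul _ _ _ hx
    _ = M := by field_simp

lemma abs_sq_average_add_sub_le {n : ℕ} {y : ℕ → ℝ} {C ε s : ℝ} (hy : ∀ i, |y i| ≤ C)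
    (hε : |ε| ≤ 1) :
    |(1 / (n : ℝ) * ∑ i ∈ range n, (y i + ε) ^ 2 - s) ^ 2
        - (1 / (n : ℝ) * ∑ i ∈ range n, y i ^ 2 - s) ^ 2|
      ≤ |ε| * ((2 * C + 1) * ((C + 1) ^ 2 + C ^ 2 + 2 * |s|)) := by
  have hC : 0 ≤ C := (abs_nonneg _).trans (hy 0)
  set a := 1 / (n : ℝ) * ∑ i ∈ range n, (y i + ε) ^ 2
  set b := 1 / (n : ℝ) * ∑ i ∈ range n, y i ^ 2
  have hyε : ∀ i, |y i + ε| ≤ C + 1 := fun i => (abs_add_le _ _).trans (add_le_add (hy i) hε)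
  have ha : |a| ≤ (C + 1) ^ 2 :=
    abs_one_div_mul_sum_le (by positivity) fun i _ => abs_sq_le_of_abs_le (hyε i)
  have hb : |b| ≤ C ^ 2 :=
    abs_one_div_mul_sum_le (by positivity) fun i _ => abs_sq_le_of_abs_le (hy i)
  have hab : |a - b| ≤ |ε| * (2 * C + 1) := by
    have : a - b = 1 / (n : ℝ) * ∑ i ∈ range n, ε * (2 * y i + ε) := by
      simp only [a, b, ← mul_sub, ← sum_sub_distrib]
      congr 1
      exact sum_congr rfl fun i _ => by ring
    rw [this]
    refine abs_one_div_mul_sum_le (by positivity) fun i _ => ?_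
    rw [abs_mul]
    gcongr
    calc |2 * y i + ε| ≤ 2 * |y i| + |ε| := by
          simpa [abs_mul] using abs_add_le (2 * y i) ε
      _ ≤ 2 * C + 1 := by linarith [hy i]
  calc |(a - s) ^ 2 - (b - s) ^ 2| = |a - b| * |a + b - 2 * s| := by
        rw [← abs_mul]; ring_nf
    _ ≤ |ε| * (2 * C + 1) * ((C + 1) ^ 2 + C ^ 2 + 2 * |s|) := by
        gcongr
        calc |a + b - 2 * s| ≤ |a + b| + |2 * s| := abs_sub _ _
          _ ≤ |a| + |b| + 2 * |s| := by
              rw [abs_mul, abs_two]; linarith [abs_add_le a b]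
          _ ≤ (C + 1) ^ 2 + C ^ 2 + 2 * |s| := by linarith
    _ = _ := by ring

section

variable {ν : Measure Ω} {Z : ℕ → Ω → ℝ} {n : ℕ}

lemma identDistrib_of_identDistrib_pair (hZ : ∀ i, AEMeasurable (Z i) ν)
    (hpair : ∀ i j, i < n → j < n → i ≠ j →
      IdentDistrib (fun ω => (Z i ω, Z j ω)) (fun ω => (Z 0 ω, Z 1 ω)) ν ν)
    {i : ℕ} (hi : i < n) : IdentDistrib (Z i) (Z 0) ν ν := by
  rcases eq_or_ne i 0 with rfl | h
  · exact .refl (hZ 0)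
  · exact (hpair i 0 hi (by omega) h).comp measurable_fst

lemma integral_sq_sum_eq_of_identDistrib_pair (hZ : ∀ i, MemLp (Z i) 2 ν)
    (hpair : ∀ i j, i < n → j < n → i ≠ j →
      IdentDistrib (fun ω => (Z i ω, Z j ω)) (fun ω => (Z 0 ω, Z 1 ω)) ν ν) :
    ∫ ω, (∑ i ∈ range n, Z i ω) ^ 2 ∂ν
      = n * ∫ ω, Z 0 ω ^ 2 ∂ν + n * (n - 1) * ∫ ω, Z 0 ω * Z 1 ω ∂ν := by
  have hint : ∀ i j, Integrable (fun ω => Z i ω * Z j ω) ν := fun i j =>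
    (hZ i).integrable_mul (hZ j)
  have hentry : ∀ i ∈ range n, ∀ j ∈ range n, ∫ ω, Z i ω * Z j ω ∂ν
      = if i = j then ∫ ω, Z 0 ω ^ 2 ∂ν else ∫ ω, Z 0 ω * Z 1 ω ∂ν := by
    intro i hi j hj
    rw [mem_range] at hi hj
    split_ifs with hij
    · subst hij
      simp_rw [← sq]
      exact ((identDistrib_of_identDistrib_pair (fun i => (hZ i).aemeasurable) hpair hi).comp
        (measurable_id.pow_const 2)).integral_eq
    · exact ((hpair i j hi hj hij).comp (measurable_fst.mul measurable_snd)).integral_eq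
  calc ∫ ω, (∑ i ∈ range n, Z i ω) ^ 2 ∂ν
      = ∑ i ∈ range n, ∑ j ∈ range n, ∫ ω, Z i ω * Z j ω ∂ν := by
        simp_rw [sq, sum_mul_sum]
        rw [integral_finsetSum _ fun i _ => integrable_finsetSum _ fun j _ => hint i j]
        exact sum_congr rfl fun i _ => integral_finsetSum _ fun j _ => hint i j
    _ = _ := by
        rw [sum_congr rfl fun i hi => sum_congr rfl (hentry i hi)]
        have hrow : ∀ i ∈ range n, (∑ j ∈ range n,
            if i = j then ∫ ω, Z 0 ω ^ 2 ∂ν else ∫ ω, Z 0 ω * Z 1 ω ∂ν)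
            = ∫ ω, Z 0 ω ^ 2 ∂ν + (n - 1) * ∫ ω, Z 0 ω * Z 1 ω ∂ν := by
          intro i hi
          rw [sum_ite, Finset.filter_eq, Finset.filter_ne, if_pos hi, sum_const, sum_const,
            card_singleton, card_erase_of_mem hi, card_range, one_smul, nsmul_eq_mul,
            Nat.cast_pred (by simp at hi; omega)]
        rw [sum_congr rfl hrow, sum_const, card_range, nsmul_eq_mul]
        ring

lemma integral_sq_average_sub_eq [IsProbabilityMeasure ν] (hZ : ∀ i, MemLp (Z i) 2 ν)
    (hpair : ∀ i j, i < n → j < n → i ≠ j →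
      IdentDistrib (fun ω => (Z i ω, Z j ω)) (fun ω => (Z 0 ω, Z 1 ω)) ν ν)
    (hn : 0 < n) (s : ℝ) :
    ∫ ω, (1 / (n : ℝ) * ∑ i ∈ range n, Z i ω - s) ^ 2 ∂ν
      = 1 / n * ∫ ω, Z 0 ω ^ 2 ∂ν + (1 - 1 / n) * ∫ ω, Z 0 ω * Z 1 ω ∂ν
        - 2 * s * ∫ ω, Z 0 ω ∂ν + s ^ 2 := by
  have hS : MemLp (fun ω => ∑ i ∈ range n, Z i ω) 2 ν := memLp_finsetSum _ fun i _ => hZ i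
  have hmean : ∫ ω, ∑ i ∈ range n, Z i ω ∂ν = n * ∫ ω, Z 0 ω ∂ν := by
    rw [integral_finsetSum _ fun i _ => (hZ i).integrable one_le_two,
      sum_congr rfl fun i hi => (identDistrib_of_identDistrib_pair
        (fun i => (hZ i).aemeasurable) hpair (mem_range.1 hi)).integral_eq,
      sum_const, card_range, nsmul_eq_mul]
  have hexpand : (fun ω => (1 / (n : ℝ) * ∑ i ∈ range n, Z i ω - s) ^ 2) = fun ω =>
      (1 / (n : ℝ)) ^ 2 * (∑ i ∈ range n, Z i ω) ^ 2
        - 2 * s / n * ∑ i ∈ range n, Z i ω + s ^ 2 := by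
    funext ω; ring
  have hS2 : Integrable (fun ω => (1 / (n : ℝ)) ^ 2 * (∑ i ∈ range n, Z i ω) ^ 2) ν :=
    hS.integrable_sq.const_mul _
  have hS1 : Integrable (fun ω => 2 * s / n * ∑ i ∈ range n, Z i ω) ν :=
    (hS.integrable one_le_two).const_mul _
  rw [hexpand, integral_add (f := fun ω => _ - _) (hS2.sub hS1) (integrable_const _),
    integral_sub hS2 hS1,
    integral_const_mul, integral_const_mul, integral_const, hmean,
    integral_sq_sum_eq_of_identDistrib_pair hZ hpair]
  have hn' : (n : ℝ) ≠ 0 := by positivity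
  simp only [probReal_univ, one_smul]
  field_simp

end

lemma tendsto_integral_sq_average_sub {ν : ℕ → Measure Ω} {Z : ℕ → Ω → ℝ} {C m s : ℝ}
    (hZm : ∀ i, Measurable (Z i)) (hZC : ∀ i ω, |Z i ω| ≤ C)
    (hν : ∀ᶠ n in atTop, IsProbabilityMeasure (ν n) ∧ ∀ i j, i < n → j < n → i ≠ j →
      IdentDistrib (fun ω => (Z i ω, Z j ω)) (fun ω => (Z 0 ω, Z 1 ω)) (ν n) (ν n))
    (hmean : Tendsto (fun n => ∫ ω, Z 0 ω ∂ν n) atTop (𝓝 m))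
    (hcorr : Tendsto (fun n => ∫ ω, Z 0 ω * Z 1 ω ∂ν n) atTop (𝓝 (m * m))) :
    Tendsto (fun n : ℕ => ∫ ω, (1 / (n : ℝ) * ∑ i ∈ range n, Z i ω - s) ^ 2 ∂ν n) atTop
      (𝓝 ((m - s) ^ 2)) := by
  have hdiag : Tendsto (fun n : ℕ => 1 / (n : ℝ) * ∫ ω, Z 0 ω ^ 2 ∂ν n) atTop (𝓝 0) := by
    refine squeeze_zero_norm' ?_ (tendsto_const_div_atTop_nhds_zero_nat (C ^ 2))
    filter_upwards [hν] with n hn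
    have := hn.1
    have hsq : ‖∫ ω, Z 0 ω ^ 2 ∂ν n‖ ≤ C ^ 2 := by
      simpa using norm_integral_le_of_norm_le_const (μ := ν n) (f := fun ω => Z 0 ω ^ 2)
        (ae_of_all _ fun ω => abs_sq_le_of_abs_le (hZC 0 ω))
    rw [norm_mul, Real.norm_of_nonneg (by positivity), div_eq_mul_one_div (C ^ 2), mul_comm (C ^ 2)]
    exact mul_le_mul_of_nonneg_left hsq (by positivity)
  have hlim := ((hdiag.add (((tendsto_const_nhds (x := (1 : ℝ))).sub
    tendsto_one_div_atTop_nhds_zero_nat).mul hcorr)).sub (hmean.const_mul (2 * s))).add_const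
    (s ^ 2)
  rw [show (m - s) ^ 2 = 0 + (1 - 0) * (m * m) - 2 * s * m + s ^ 2 by ring]
  refine hlim.congr' ?_
  filter_upwards [hν, eventually_gt_atTop 0] with n ⟨hprob, hpair⟩ hn
  exact (integral_sq_average_sub_eq (fun i => MemLp.of_bound (hZm i).aestronglyMeasurable C
    (ae_of_all _ (hZC i))) hpair hn s).symm

lemma tendsto_integral_of_abs_sub_le {ν : ℕ → Measure Ω} {f g : ℕ → Ω → ℝ} {ε : ℕ → ℝ}
    {a : ℝ} (hν : ∀ᶠ n in atTop, IsProbabilityMeasure (ν n)) (hf : ∀ n, Measurable (f n))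
    (hg : ∀ᶠ n in atTop, Integrable (g n) (ν n))
    (hfg : ∀ᶠ n in atTop, ∀ ω, |f n ω - g n ω| ≤ ε n) (hε : Tendsto ε atTop (𝓝 0))
    (h : Tendsto (fun n => ∫ ω, g n ω ∂ν n) atTop (𝓝 a)) :
    Tendsto (fun n => ∫ ω, f n ω ∂ν n) atTop (𝓝 a) := by
  have hdiff : Tendsto (fun n => ∫ ω, f n ω ∂ν n - ∫ ω, g n ω ∂ν n) atTop (𝓝 0) := by
    refine squeeze_zero_norm' ?_ hε
    filter_upwards [hν, hg, hfg] with n hprob hgn hb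
    have hsub : Integrable (fun ω => f n ω - g n ω) (ν n) :=
      .of_bound ((hf n).aestronglyMeasurable.sub hgn.aestronglyMeasurable) (ε n) (ae_of_all _ hb)
    have hfn : Integrable (f n) (ν n) := (hsub.add hgn).congr (ae_of_all _ fun ω => by simp)
    rw [← integral_sub hfn hgn]
    simpa using norm_integral_le_of_norm_le_const (μ := ν n) (f := fun ω => f n ω - g n ω)
      (ae_of_all _ hb)
  simpa using h.add hdiff

lemma tendsto_integral_sq_average_sq_add_inv_sub {ν : ℕ → Measure Ω} {Y : ℕ → Ω → ℝ}
    {C m s : ℝ} (hYm : ∀ i, Measurable (Y i)) (hYC : ∀ i ω, |Y i ω| ≤ C)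
    (hν : ∀ᶠ n in atTop, IsProbabilityMeasure (ν n) ∧ ∀ i j, i < n → j < n → i ≠ j →
      IdentDistrib (fun ω => (Y i ω, Y j ω)) (fun ω => (Y 0 ω, Y 1 ω)) (ν n) (ν n))
    (hmean : Tendsto (fun n => ∫ ω, Y 0 ω ^ 2 ∂ν n) atTop (𝓝 m))
    (hcorr : Tendsto (fun n => ∫ ω, Y 0 ω ^ 2 * Y 1 ω ^ 2 ∂ν n) atTop (𝓝 (m * m))) :
    Tendsto (fun n : ℕ => ∫ ω,
        (1 / (n : ℝ) * ∑ i ∈ range n, (Y i ω + 1 / (n : ℝ)) ^ 2 - s) ^ 2 ∂ν n) atTop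
      (𝓝 ((m - s) ^ 2)) := by
  have hY2 : ∀ i ω, |Y i ω ^ 2| ≤ C ^ 2 := fun i ω => abs_sq_le_of_abs_le (hYC i ω)
  refine tendsto_integral_of_abs_sub_le
    (g := fun n ω => (1 / (n : ℝ) * ∑ i ∈ range n, Y i ω ^ 2 - s) ^ 2)
    (hν.mono fun n h => h.1) (fun n => by fun_prop) ?_ ?_
    (tendsto_const_div_atTop_nhds_zero_nat ((2 * C + 1) * ((C + 1) ^ 2 + C ^ 2 + 2 * |s|))) ?_
  · filter_upwards [hν] with n hn
    have := hn.1
    refine .of_bound (by fun_prop) ((C ^ 2 + |s|) ^ 2) (ae_of_all _ fun ω => ?_)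
    rw [Real.norm_eq_abs, abs_pow]
    gcongr
    exact (abs_sub _ _).trans
      (add_le_add (abs_one_div_mul_sum_le (by positivity) fun i _ => hY2 i ω) le_rfl)
  · filter_upwards [eventually_gt_atTop 0] with n hn ω
    have hn' : (0 : ℝ) < n := by exact_mod_cast hn
    have hε : |1 / (n : ℝ)| ≤ 1 := by
      rw [abs_of_pos (by positivity), div_le_one hn']
      exact_mod_cast hn
    refine (abs_sq_average_add_sub_le (fun i => hYC i ω) hε).trans_eq ?_
    rw [abs_of_pos (by positivity)]
    ring
  · exact tendsto_integral_sq_average_sub (Z := fun i ω => Y i ω ^ 2)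
      (fun i => (hYm i).pow_const 2) hY2
      (hν.mono fun n h => ⟨h.1, fun i j hi hj hij => (h.2 i j hi hj hij).comp
        (u := fun p : ℝ × ℝ => (p.1 ^ 2, p.2 ^ 2)) (by fun_prop)⟩)
      hmean hcorr

lemma ProbabilityTheory.IndepFun.integral_comp_mul_comp_of_identDistrib {P : Measure Ω}
    {X Y : Ω → β} (hXY : IndepFun X Y P) (hYX : IdentDistrib Y X P P) {h : β → ℝ}
    (hh : Measurable h) :
    ∫ ω, h (X ω) * h (Y ω) ∂P = (∫ ω, h (X ω) ∂P) * ∫ ω, h (X ω) ∂P := by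
  rw [hXY.integral_fun_comp_mul_comp hYX.aemeasurable_snd hYX.aemeasurable_fst
    hh.aestronglyMeasurable hh.aestronglyMeasurable]
  exact congrArg _ (hYX.comp hh).integral_eq

end

lemma abs_truncation_sub_one_le (x k : ℕ) : |(if x ≤ k then (x : ℝ) else 0) - 1| ≤ k + 1 := by
  have : 0 ≤ (if x ≤ k then (x : ℝ) else 0) ∧ (if x ≤ k then (x : ℝ) else 0) ≤ k := by
    split_ifs with h
    · exact ⟨x.cast_nonneg, by exact_mod_cast h⟩
    · exact ⟨le_rfl, k.cast_nonneg⟩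
  rw [abs_le]
  constructor <;> linarith [this.1, this.2]

theorem stmt_3_general {Ω : Type*} [MeasurableSpace Ω] (P : Measure Ω) [IsProbabilityMeasure P]
    (ξ : ℕ → Ω → ℕ) (hmeas : ∀ i, Measurable (ξ i))
    (hindep : iIndepFun ξ P)
    (hident : ∀ i, Measure.map (ξ i) P = Measure.map (ξ 0) P)
    (σ2 : ℝ)
    (A : ℕ → Set Ω) (hA : ∀ n, A n = {ω | ∑ i ∈ Finset.range n, ξ i ω = n - 1})
    (hpos : ∀ᶠ n in atTop, 0 < P (A n))
    (hcond : ∀ g : ℕ × ℕ → ℝ, Measurable g →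
      Integrable (fun ω => g (ξ 0 ω, ξ 1 ω)) P →
      Tendsto (fun n => ∫ ω, g (ξ 0 ω, ξ 1 ω) ∂(P[|A n])) atTop
        (nhds (∫ ω, g (ξ 0 ω, ξ 1 ω) ∂P)))
    (k : ℕ) :
    Tendsto (fun n => ∫ ω,
        ((1 / (n : ℝ)) * ∑ i ∈ Finset.range n,
          ((if ξ i ω ≤ k then (ξ i ω : ℝ) else 0) - 1 + 1 / (n : ℝ)) ^ 2 - σ2) ^ 2
        ∂(P[|A n])) atTop
      (nhds ((∫ ω, ((if ξ 0 ω ≤ k then (ξ 0 ω : ℝ) else 0) - 1) ^ 2 ∂P - σ2) ^ 2)) := by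
  set y : ℕ → ℝ := fun x => (if x ≤ k then (x : ℝ) else 0) - 1
  have hy : ∀ x, |y x| ≤ k + 1 := fun x => abs_truncation_sub_one_le x k
  have hbdd : ∀ (g : ℕ × ℕ → ℝ) (C : ℝ), (∀ p, |g p| ≤ C) →
      Integrable (fun ω => g (ξ 0 ω, ξ 1 ω)) P := fun g C hC =>
    .of_bound ((measurable_of_countable g).comp ((hmeas 0).prodMk (hmeas 1))).aestronglyMeasurable
      C (ae_of_all _ fun ω => hC _)
  have hm01 := (hindep.indepFun zero_ne_one).integral_comp_mul_comp_of_identDistrib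
    ⟨(hmeas 1).aemeasurable, (hmeas 0).aemeasurable, hident 1⟩
    (measurable_of_countable fun x => y x ^ 2)
  refine tendsto_integral_sq_average_sq_add_inv_sub (Y := fun i ω => y (ξ i ω))
    (fun i => (measurable_of_countable y).comp (hmeas i)) (fun i ω => hy (ξ i ω)) ?_
    (hcond (fun p => y p.1 ^ 2) (measurable_of_countable _)
      (hbdd _ _ fun p => abs_sq_le_of_abs_le (hy p.1)))
    (hm01 ▸ hcond (fun p => y p.1 ^ 2 * y p.2 ^ 2) (measurable_of_countable _)
      (hbdd _ _ fun p => (abs_mul _ _).trans_le (mul_le_mul (abs_sq_le_of_abs_le (hy p.1))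
        (abs_sq_le_of_abs_le (hy p.2)) (abs_nonneg _) (by positivity))))
  filter_upwards [hpos] with n hn
  refine ⟨cond_isProbabilityMeasure hn.ne', fun i j hi hj hij => ?_⟩
  rw [hA]
  exact (identDistrib_pair_cond_sum_eq hmeas hindep hident n (n - 1) hi hj hij).comp
    (measurable_of_countable fun p : ℕ × ℕ => (y p.1, y p.2))

theorem stmt_3 {Ω : Type*} [MeasurableSpace Ω] (P : Measure Ω) [IsProbabilityMeasure P]
    (ξ : ℕ → Ω → ℕ) (hmeas : ∀ i, Measurable (ξ i))
    (hindep : iIndepFun ξ P)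
    (hident : ∀ i, Measure.map (ξ i) P = Measure.map (ξ 0) P)
    (hmean : ∫ ω, (ξ 0 ω : ℝ) ∂P = 1)
    (hL2 : Integrable (fun ω => ((ξ 0 ω : ℝ)) ^ 2) P)
    (σ2 : ℝ) (hσ2 : σ2 = variance (fun ω => (ξ 0 ω : ℝ)) P)
    (A : ℕ → Set Ω) (hA : ∀ n, A n = {ω | ∑ i ∈ Finset.range n, ξ i ω = n - 1})
    (hpos : ∀ᶠ n in atTop, 0 < P (A n))
    (hcond : ∀ g : ℕ × ℕ → ℝ, Measurable g →
      Integrable (fun ω => g (ξ 0 ω, ξ 1 ω)) P →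
      Tendsto (fun n => ∫ ω, g (ξ 0 ω, ξ 1 ω) ∂(P[|A n])) atTop
        (nhds (∫ ω, g (ξ 0 ω, ξ 1 ω) ∂P)))
    (k : ℕ) (hk : 1 ≤ k) :
    Tendsto (fun n => ∫ ω,
        ((1 / (n : ℝ)) * ∑ i ∈ Finset.range n,
          ((if ξ i ω ≤ k then (ξ i ω : ℝ) else 0) - 1 + 1 / (n : ℝ)) ^ 2 - σ2) ^ 2
        ∂(P[|A n])) atTop
      (nhds ((∫ ω, ((if ξ 0 ω ≤ k then (ξ 0 ω : ℝ) else 0) - 1) ^ 2 ∂P - σ2) ^ 2)) :=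
  stmt_3_general P ξ hmeas hindep hident σ2 A hA hpos hcond k
end

section
/- For every real number x with |x| < 1, the power series identity ∑_{k=0}^∞ (4^{k+1} · ((k+1)!)² / (2k+1)!) · x^{2k+1} = ( 3x·√(1−x²) + (2x²+1)·arcsin(x) ) / (1−x²)^{5/2} holds (in particular the series on the left converges). -/
/-!
Write `b k = 4 ^ k (k!)² / (2k+1)!` and `G x = ∑ b k x ^ (2k+1)`; the `k`-th term of the series
is `(2k+2)² b k x ^ (2k+1)`. The recurrence `(2k+3) b (k+1) = (2k+2) b k` makes this series the
termwise second derivative of `G`, and turns the comparison of coefficients of `G` and `G'` into the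
differential equation `(1 - x²) G' = 1 + x G`. Since `(√(1 - x²) G - arcsin)' = 0` by that
equation, `G = arcsin x / √(1 - x²)`; differentiating the equation once more gives
`(1 - x²)² G'' = 3x + (2x² + 1) G`.
-/

open Real Nat Filter Topology

section PowerSeries

variable {c : ℕ → ℝ} {e : ℕ → ℕ} {C : ℝ} {p : ℕ}

theorem summable_mul_pow_of_abs_le (hc : ∀ k, |c k| ≤ C * (k + 1) ^ p) (he : ∀ k, k ≤ e k)
    {y : ℝ} (hy : |y| < 1) : Summable fun k => c k * y ^ e k := by
  have hC : 0 ≤ C := by simpa using (abs_nonneg _).trans (hc 0)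
  have hgeom : Summable fun k : ℕ => C * 2 ^ (p - 1) * ((k : ℝ) ^ p * |y| ^ k + |y| ^ k) :=
    ((summable_pow_mul_geometric_of_norm_lt_one p (by rwa [norm_abs_eq_norm, norm_eq_abs])).add
      (summable_geometric_of_lt_one (abs_nonneg y) hy)).mul_left _
  refine hgeom.of_norm_bounded fun k => ?_
  calc ‖c k * y ^ e k‖ = |c k| * |y| ^ e k := by rw [norm_eq_abs, abs_mul, abs_pow]
    _ ≤ C * ((k : ℝ) + 1) ^ p * |y| ^ k :=
      mul_le_mul (hc k) (pow_le_pow_of_le_one (abs_nonneg y) hy.le (he k)) (by positivity)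
        (by positivity)
    _ ≤ C * (2 ^ (p - 1) * ((k : ℝ) ^ p + 1 ^ p)) * |y| ^ k := by
      gcongr; exact add_pow_le (Nat.cast_nonneg k) zero_le_one p
    _ = C * 2 ^ (p - 1) * ((k : ℝ) ^ p * |y| ^ k + |y| ^ k) := by ring

theorem hasDerivAt_tsum_mul_pow (hc : ∀ k, |c k * e k| ≤ C * (k + 1) ^ p)
    (he : ∀ k, k ≤ e k - 1) {x : ℝ} (hx : |x| < 1) :
    HasDerivAt (fun y => ∑' k, c k * y ^ e k) (∑' k, c k * (e k * x ^ (e k - 1))) x := by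
  obtain ⟨r, hxr, hr1⟩ := exists_between hx
  have hr0 : 0 < r := (abs_nonneg x).trans_lt hxr
  have mem_ball {y : ℝ} : y ∈ Metric.ball 0 r ↔ |y| < r := by rw [mem_ball_zero_iff, norm_eq_abs]
  refine hasDerivAt_tsum_of_isPreconnected (y₀ := 0)
    (summable_mul_pow_of_abs_le (c := fun k => |c k * e k|) (by simpa using hc) he
      (by rwa [abs_of_pos hr0]))
    Metric.isOpen_ball (convex_ball 0 r).isPreconnected
    (fun k y _ => (hasDerivAt_pow (e k) y).const_mul (c k))
    (fun k y hy => ?_) (Metric.mem_ball_self hr0) ?_ (mem_ball.2 hxr)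
  · rw [← mul_assoc, norm_mul, norm_pow, norm_eq_abs, norm_eq_abs]
    gcongr
    exact (mem_ball.1 hy).le
  · refine summable_of_ne_finset_zero (s := {0}) fun k hk => ?_
    have : e k ≠ 0 := by have := he k; simp only [Finset.mem_singleton] at hk; omega
    simp [this]

end PowerSeries

namespace ArcsinDivSqrt

noncomputable def coeff (k : ℕ) : ℝ := 4 ^ k * (k ! : ℝ) ^ 2 / (2 * k + 1)!

theorem coeff_zero : coeff 0 = 1 := by simp [coeff]

theorem coeff_pos (k : ℕ) : 0 < coeff k := by unfold coeff; positivity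

theorem mul_coeff_succ (k : ℕ) : (2 * k + 3) * coeff (k + 1) = (2 * k + 2) * coeff k := by
  rw [coeff, coeff, show 2 * (k + 1) + 1 = 2 * k + 1 + 1 + 1 by ring, factorial_succ,
    factorial_succ, factorial_succ]
  push_cast
  field_simp
  ring

theorem coeff_le_one (k : ℕ) : coeff k ≤ 1 := by
  induction k with
  | zero => rw [coeff_zero]
  | succ k ih => nlinarith [mul_coeff_succ k, coeff_pos k, coeff_pos (k + 1)]

noncomputable def series (y : ℝ) : ℝ := ∑' k, coeff k * y ^ (2 * k + 1)

noncomputable def derivSeries (y : ℝ) : ℝ := ∑' k, (2 * k + 1) * coeff k * y ^ (2 * k)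

noncomputable def secondDerivSeries (y : ℝ) : ℝ :=
  ∑' k, (2 * k + 2) ^ 2 * coeff k * y ^ (2 * k + 1)

theorem abs_mul_coeff_le {a : ℝ} (ha : 0 ≤ a) (k : ℕ) : |a * coeff k| ≤ a := by
  rw [abs_of_nonneg (mul_nonneg ha (coeff_pos k).le)]
  exact mul_le_of_le_one_right ha (coeff_le_one k)

variable {x : ℝ}

theorem summable_series (hx : |x| < 1) : Summable fun k => coeff k * x ^ (2 * k + 1) :=
  summable_mul_pow_of_abs_le (C := 1) (p := 0)
    (fun k => by simpa using abs_mul_coeff_le zero_le_one k) (by omega) hx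

theorem summable_derivSeries (hx : |x| < 1) :
    Summable fun k => (2 * k + 1) * coeff k * x ^ (2 * k) :=
  summable_mul_pow_of_abs_le (C := 2) (p := 1)
    (fun k => (abs_mul_coeff_le (by positivity) k).trans (by linarith)) (by omega) hx

theorem summable_secondDerivSeries (hx : |x| < 1) :
    Summable fun k => (2 * k + 2) ^ 2 * coeff k * x ^ (2 * k + 1) :=
  summable_mul_pow_of_abs_le (C := 4) (p := 2)
    (fun k => (abs_mul_coeff_le (by positivity) k).trans (by linarith)) (by omega) hx

theorem hasDerivAt_series (hx : |x| < 1) : HasDerivAt series (derivSeries x) x := by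
  refine (hasDerivAt_tsum_mul_pow (c := coeff) (e := fun k => 2 * k + 1) (C := 2) (p := 1)
    (fun k => ?_) (by omega) hx).congr_deriv (tsum_congr fun k => ?_)
  · rw [mul_comm]; push_cast
    exact (abs_mul_coeff_le (by positivity) k).trans (by linarith)
  · rw [Nat.add_sub_cancel]; push_cast; ring

theorem hasDerivAt_derivSeries (hx : |x| < 1) :
    HasDerivAt derivSeries (secondDerivSeries x) x := by
  refine (hasDerivAt_tsum_mul_pow (c := fun k => (2 * k + 1) * coeff k) (e := fun k => 2 * k)
    (C := 4) (p := 2) (fun k => ?_) (by omega) hx).congr_deriv ?_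
  · rw [mul_right_comm]; push_cast
    exact (abs_mul_coeff_le (by positivity) k).trans (by nlinarith)
  · have shift (k : ℕ) : (2 * ((k + 1 : ℕ) : ℝ) + 1) * coeff (k + 1) *
        (((2 * (k + 1) : ℕ) : ℝ) * x ^ (2 * (k + 1) - 1)) =
        (2 * k + 2) ^ 2 * coeff k * x ^ (2 * k + 1) := by
      rw [show 2 * (k + 1) - 1 = 2 * k + 1 by omega]
      push_cast
      linear_combination (2 * k + 2) * x ^ (2 * k + 1) * mul_coeff_succ k
    rw [tsum_eq_zero_add' ((summable_secondDerivSeries hx).congr fun k => (shift k).symm)]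
    simp only [shift, CharP.cast_eq_zero, mul_zero, zero_mul, zero_add, secondDerivSeries]

theorem series_zero : series 0 = 0 := by simp [series]

theorem one_sub_sq_mul_derivSeries (hx : |x| < 1) :
    (1 - x ^ 2) * derivSeries x = 1 + x * series x := by
  set a : ℕ → ℝ := fun k => (2 * k + 1) * coeff k * x ^ (2 * k) with ha
  have tail : x ^ 2 * derivSeries x + x * series x = ∑' k, a (k + 1) := by
    rw [derivSeries, series, ← tsum_mul_left, ← tsum_mul_left,
      ← ((summable_derivSeries hx).mul_left _).tsum_add ((summable_series hx).mul_left _)]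
    refine tsum_congr fun k => ?_
    simp only [ha]
    push_cast
    linear_combination (-x ^ (2 * k + 2)) * mul_coeff_succ k
  have split : derivSeries x = 1 + ∑' k, a (k + 1) := by
    rw [derivSeries, (summable_derivSeries hx).tsum_eq_zero_add]
    simp [ha, coeff_zero]
  linear_combination split - tail

theorem hasDerivAt_sqrt_mul_series_sub_arcsin (hx : |x| < 1) :
    HasDerivAt (fun y => √(1 - y ^ 2) * series y - arcsin y) 0 x := by
  obtain ⟨h₁, h₂⟩ := abs_lt.1 hx
  have hpos : 0 < 1 - x ^ 2 := by nlinarith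
  have hsqrt := ((hasDerivAt_pow 2 x).const_sub 1).sqrt hpos.ne'
  refine ((hsqrt.fun_mul (hasDerivAt_series hx)).fun_sub
    (hasDerivAt_arcsin h₁.ne' h₂.ne)).congr_deriv ?_
  have hs := sq_sqrt hpos.le
  field_simp
  linear_combination 2 * derivSeries x * hs + 2 * one_sub_sq_mul_derivSeries hx

theorem series_eq (hx : |x| < 1) : series x = arcsin x / √(1 - x ^ 2) := by
  have mem_ball {y : ℝ} : y ∈ Metric.ball 0 1 ↔ |y| < 1 := by rw [mem_ball_zero_iff, norm_eq_abs]
  have hderiv (y) (hy : y ∈ Metric.ball 0 1) :=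
    hasDerivAt_sqrt_mul_series_sub_arcsin (mem_ball.1 hy)
  have hconst := Metric.isOpen_ball.is_const_of_deriv_eq_zero (convex_ball 0 1).isPreconnected
    (fun y hy => (hderiv y hy).differentiableAt.differentiableWithinAt)
    (fun y hy => (hderiv y hy).deriv) (mem_ball.2 hx) (Metric.mem_ball_self one_pos)
  have hpos : 0 < 1 - x ^ 2 := by nlinarith [abs_lt.1 hx]
  rw [series_zero, arcsin_zero, mul_zero, sub_zero] at hconst
  rw [eq_div_iff (sqrt_pos.2 hpos).ne', mul_comm]
  linarith

theorem one_sub_sq_sq_mul_secondDerivSeries (hx : |x| < 1) :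
    (1 - x ^ 2) ^ 2 * secondDerivSeries x = 3 * x + (2 * x ^ 2 + 1) * series x := by
  have hode : (fun y => 1 + y * series y) =ᶠ[𝓝 x] fun y => (1 - y ^ 2) * derivSeries y := by
    filter_upwards [(isOpen_lt continuous_abs continuous_const).mem_nhds hx] with y hy
    exact (one_sub_sq_mul_derivSeries hy).symm
  have hderiv : (1 - x ^ 2) * secondDerivSeries x = series x + 3 * x * derivSeries x := by
    have h := ((hasDerivAt_id' x).fun_mul (hasDerivAt_series hx)).const_add 1
    have := (h.congr_of_eventuallyEq hode.symm).unique
      (((hasDerivAt_pow 2 x).const_sub 1).mul (hasDerivAt_derivSeries hx))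
    linear_combination -this
  linear_combination (1 - x ^ 2) * hderiv + 3 * x * one_sub_sq_mul_derivSeries hx

end ArcsinDivSqrt

open ArcsinDivSqrt

theorem stmt_6 (x : ℝ) (hx : |x| < 1) :
    Summable (fun k : ℕ => (4 : ℝ) ^ (k + 1) * ((Nat.factorial (k + 1) : ℝ)) ^ 2 /
      (Nat.factorial (2 * k + 1) : ℝ) * x ^ (2 * k + 1)) ∧
    ∑' k : ℕ, (4 : ℝ) ^ (k + 1) * ((Nat.factorial (k + 1) : ℝ)) ^ 2 /
        (Nat.factorial (2 * k + 1) : ℝ) * x ^ (2 * k + 1) =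
      (3 * x * Real.sqrt (1 - x ^ 2) + (2 * x ^ 2 + 1) * Real.arcsin x) /
        (Real.sqrt (1 - x ^ 2)) ^ 5 := by
  have hcoeff (k : ℕ) : (4 : ℝ) ^ (k + 1) * ((Nat.factorial (k + 1) : ℝ)) ^ 2 /
      (Nat.factorial (2 * k + 1) : ℝ) = (2 * k + 2) ^ 2 * coeff k := by
    rw [coeff, factorial_succ]; push_cast; ring
  simp only [hcoeff]
  refine ⟨summable_secondDerivSeries hx, ?_⟩
  have hpos : 0 < 1 - x ^ 2 := by nlinarith [abs_lt.1 hx]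
  have key := one_sub_sq_sq_mul_secondDerivSeries hx
  rw [series_eq hx] at key
  rw [← secondDerivSeries]
  have hs0 : √(1 - x ^ 2) ≠ 0 := (sqrt_pos.2 hpos).ne'
  set s := √(1 - x ^ 2)
  have hs : s ^ 2 = 1 - x ^ 2 := sq_sqrt hpos.le
  rw [← hs] at key
  field_simp at key ⊢
  linear_combination key
end

section
/- For every N ≥ 1 and all x, y : Fin N → ℝ, let x↑ and y↑ denote the nondecreasing rearrangements of x and y (i.e., x↑ = x ∘ σ for a permutation σ of Fin N such that x∘σ is monotone nondecreasing, and similarly for y↑). Then ∑_{i=1}^N (x↑_i − y↑_i)² ≤ ∑_{i=1}^N (x_i − y_i)². In other words, the sorting map (x₁,…,x_N) ↦ (x_{(1)},…,x_{(N)}) is 1-Lipschitz with respect to the Euclidean norm on ℝ^N. -/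
theorem stmt_15 (N : ℕ) (x y : Fin N → ℝ) (σ τ : Equiv.Perm (Fin N))
    (hσ : Monotone (x ∘ σ)) (hτ : Monotone (y ∘ τ)) :
    ∑ i, (x (σ i) - y (τ i)) ^ 2 ≤ ∑ i, (x i - y i) ^ 2 := by
  have hmono : Monovary (x ∘ σ) (y ∘ τ) := hσ.monovary hτ
  have key : ∑ i, x i * y i ≤ ∑ i, x (σ i) * y (τ i) := by
    have h1 : ∑ i, x i * y i = ∑ i, (x ∘ σ) i * ((y ∘ τ) ∘ (σ.trans τ.symm)) i := by
      rw [← Equiv.sum_comp σ (fun i => x i * y i)]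
      simp
    rw [h1]
    exact hmono.sum_mul_comp_perm_le_sum_mul (σ := σ.trans τ.symm)
  have hx : ∑ i, x (σ i) ^ 2 = ∑ i, x i ^ 2 := Equiv.sum_comp σ (fun i => x i ^ 2)
  have hy : ∑ i, y (τ i) ^ 2 = ∑ i, y i ^ 2 := Equiv.sum_comp τ (fun i => y i ^ 2)
  have expand : ∀ (f g : Fin N → ℝ),
      ∑ i, (f i - g i) ^ 2 = ∑ i, f i ^ 2 - 2 * ∑ i, f i * g i + ∑ i, g i ^ 2 := by
    intro f g
    simp only [sub_sq]
    rw [Finset.sum_add_distrib, Finset.sum_sub_distrib]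
    simp [Finset.mul_sum, Finset.sum_mul, mul_assoc]
  rw [expand, expand, hx, hy]
  linarith
end
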